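/- arXiv:math/0607449 — 4 statements merged into one kernel-verified Lean document; each statement's English description precedes it below -/
import Mathlib

section
/- For compact convex sets A, K, L in a finite-dimensional Euclidean space V with K ∪ L convex, the function μ_A defined by μ_A(K) := vol(A + K) (Minkowski sum) satisfies the valuation property: μ_A(K ∪ L) + μ_A(K ∩ L) = μ_A(K) + μ_A(L). -/
open Set MeasureTheory
open scoped Pointwise

/-- The map `μ_A : K ↦ vol(A + K)` satisfies the valuation property. -/
theorem stmt_0 (n : ℕ) (A K L : Set (EuclideanSpace ℝ (Fin n)))
    (hA : IsCompact A) (hAconv : Convex ℝ A)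
    (hK : IsCompact K) (hKconv : Convex ℝ K)
    (hL : IsCompact L) (hLconv : Convex ℝ L)
    (hKL : Convex ℝ (K ∪ L)) :
    volume (A + (K ∪ L)) + volume (A + (K ∩ L)) = volume (A + K) + volume (A + L) := by
  have h1 : A + (K ∪ L) = (A + K) ∪ (A + L) := by
    ext x
    simp only [Set.mem_add, Set.mem_union]
    constructor
    · rintro ⟨a, ha, b, (hb | hb), rfl⟩
      · exact Or.inl ⟨a, ha, b, hb, rfl⟩
      · exact Or.inr ⟨a, ha, b, hb, rfl⟩
    · rintro (⟨a, ha, b, hb, rfl⟩ | ⟨a, ha, b, hb, rfl⟩)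
      · exact ⟨a, ha, b, Or.inl hb, rfl⟩
      · exact ⟨a, ha, b, Or.inr hb, rfl⟩
  have h2 : A + (K ∩ L) = (A + K) ∩ (A + L) := by
    apply Set.Subset.antisymm
    · exact Set.subset_inter
        (Set.add_subset_add_left Set.inter_subset_left)
        (Set.add_subset_add_left Set.inter_subset_right)
    · rintro x ⟨hx1, hx2⟩
      obtain ⟨a, ha, k, hk, hak⟩ := hx1
      obtain ⟨a', ha', l, hl, hal⟩ := hx2
      -- the segment from k to l lies in K ∪ L
      have hseg : segment ℝ k l ⊆ K ∪ L :=
        hKL.segment_subset (Or.inl hk) (Or.inr hl)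
      -- by connectedness, some point of the segment lies in K ∩ L
      have hpre : IsPreconnected (segment ℝ k l) :=
        (convex_segment k l).isPreconnected
      have hmem : (segment ℝ k l ∩ (K ∩ L)).Nonempty := by
        have := (isPreconnected_closed_iff.mp hpre) K L hK.isClosed hL.isClosed
          hseg ⟨k, left_mem_segment ℝ k l, hk⟩ ⟨l, right_mem_segment ℝ k l, hl⟩
        exact this
      obtain ⟨m, hmseg, hmK, hmL⟩ := hmem
      obtain ⟨u, v, hu, hv, huv, hm⟩ := hmseg
      refine ⟨u • a + v • a', hAconv ha ha' hu hv huv, m, ⟨hmK, hmL⟩, ?_⟩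
      show (u • a + v • a') + m = x
      have : (u • a + v • a') + m = u • (a + k) + v • (a' + l) := by
        rw [← hm]
        module
      rw [this, show a + k = x from hak, show a' + l = x from hal,
        ← add_smul, huv, one_smul]
  rw [h1, h2]
  exact measure_union_add_inter _ (hA.add hL).measurableSet
end

section
/- For compact convex sets A, B in an n-dimensional Euclidean space V and any compact convex K, the Alesker product μ_A · μ_B evaluated at K satisfies μ_A·μ_B(K) = ∫_V μ_B(K ∩ (x − A)) dx. -/
open Set MeasureTheory
open scoped Pointwise

/-- The Alesker product of `μ_A` and `μ_B`:
`vol_{2n}(Δ(K) + A × B) = ∫_V μ_B(K ∩ (x − A)) dx`. -/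
theorem stmt_2 (n : ℕ) (A B K : Set (EuclideanSpace ℝ (Fin n)))
    (hA : IsCompact A) (hAconv : Convex ℝ A)
    (hB : IsCompact B) (hBconv : Convex ℝ B)
    (hK : IsCompact K) (hKconv : Convex ℝ K) :
    volume ((fun v => (v, v)) '' K + A ×ˢ B)
      = ∫⁻ x, volume (B + (K ∩ ({x} - A))) := by
  have hS : IsCompact ((fun v => (v, v)) '' K + A ×ˢ B) :=
    (hK.image (continuous_id.prodMk continuous_id)).add (hA.prod hB)
  rw [Measure.volume_eq_prod, Measure.prod_apply hS.measurableSet]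
  refine lintegral_congr fun x => ?_
  congr 1
  ext y
  simp only [mem_preimage, Set.mem_add, Set.mem_image, Set.mem_prod,
    Set.mem_inter_iff, Set.mem_sub, Set.mem_singleton_iff, Prod.mk_add_mk,
    Prod.mk.injEq, Prod.exists]
  constructor
  · rintro ⟨a, b, ⟨k, hk, rfl, rfl⟩, a1, b1, ⟨ha, hb⟩, hx, hy⟩
    exact ⟨b1, hb, k, ⟨hk, x, rfl, a1, ha, by rw [← hx]; abel⟩, by rw [← hy]; abel⟩
  · rintro ⟨b, hb, k, ⟨hk, x', rfl, a, ha, hka⟩, hy⟩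
    exact ⟨k, k, ⟨k, hk, rfl, rfl⟩, a, b, ⟨ha, hb⟩, by rw [← hka]; abel,
      by rw [← hy]; abel⟩
end

section
/- The function cos on pairs of k-dimensional subspaces defined by the relation vol_k(π_Q(A)) = cos(P,Q)·vol_k(A) for compact convex A ⊆ P (π_Q orthogonal projection onto Q) is symmetric: cos(P,Q) = cos(Q,P) for all P, Q ∈ Gr_k(V). -/
open Set MeasureTheory Module
open scoped Pointwise MeasureTheory RealInnerProductSpace

variable {n k : ℕ}

noncomputable def isomE (P : Submodule ℝ (EuclideanSpace ℝ (Fin n)))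
    (hP : Module.finrank ℝ P = k) : EuclideanSpace ℝ (Fin k) ≃ₗᵢ[ℝ] P :=
  ((stdOrthonormalBasis ℝ P).reindex (finCongr hP)).repr.symm

noncomputable def projMap (P Q : Submodule ℝ (EuclideanSpace ℝ (Fin n)))
    (hP : Module.finrank ℝ P = k) (hQ : Module.finrank ℝ Q = k) :
    EuclideanSpace ℝ (Fin k) →ₗ[ℝ] EuclideanSpace ℝ (Fin k) :=
  (isomE Q hQ).symm.toLinearEquiv.toLinearMap ∘ₗ
    (Submodule.orthogonalProjectionOnto Q).toLinearMap ∘ₗ P.subtype ∘ₗ (isomE P hP).toLinearEquiv.toLinearMap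

lemma projMap_adjoint (P Q : Submodule ℝ (EuclideanSpace ℝ (Fin n)))
    (hP : Module.finrank ℝ P = k) (hQ : Module.finrank ℝ Q = k) :
    projMap Q P hQ hP = LinearMap.adjoint (projMap P Q hP hQ) := by
  rw [LinearMap.eq_adjoint_iff]
  intro x y
  simp only [projMap, LinearMap.comp_apply, LinearEquiv.coe_coe,
    LinearIsometryEquiv.coe_toLinearEquiv, Submodule.coe_subtype]
  rw [← LinearIsometryEquiv.inner_map_map (isomE P hP) _ y,
    ← LinearIsometryEquiv.inner_map_map (isomE Q hQ) x]
  rw [LinearIsometryEquiv.apply_symm_apply, LinearIsometryEquiv.apply_symm_apply]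
  simp

lemma det_adjoint_real {m : ℕ} (T : EuclideanSpace ℝ (Fin m) →ₗ[ℝ] EuclideanSpace ℝ (Fin m)) :
    LinearMap.det (LinearMap.adjoint T) = LinearMap.det T := by
  let b := EuclideanSpace.basisFun (Fin m) ℝ
  rw [← LinearMap.det_toMatrix b.toBasis, ← LinearMap.det_toMatrix b.toBasis,
    LinearMap.toMatrix_adjoint b b, Matrix.det_conjTranspose, star_trivial]

lemma cos_eq_det (P Q : Submodule ℝ (EuclideanSpace ℝ (Fin n)))
    (hP : Module.finrank ℝ P = k) (hQ : Module.finrank ℝ Q = k) (c : ℝ)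
    (h1 : ∀ A : Set (EuclideanSpace ℝ (Fin n)), IsCompact A → Convex ℝ A →
      A ⊆ (P : Set (EuclideanSpace ℝ (Fin n))) →
      (μH[(k : ℝ)] ((fun x => (Submodule.orthogonalProjectionOnto Q x : EuclideanSpace ℝ (Fin n))) '' A)).toReal
        = c * (μH[(k : ℝ)] A).toReal) :
    c = |LinearMap.det (projMap P Q hP hQ)| := by
  set E := EuclideanSpace ℝ (Fin k)
  set V := EuclideanSpace ℝ (Fin n)
  set f := isomE P hP
  set φ := isomE Q hQ
  set T := projMap P Q hP hQ with hT
  haveI : (μH[(k:ℝ)] : Measure E).IsAddHaarMeasure := by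
    have h : ((finrank ℝ E : ℕ) : ℝ) = (k : ℝ) := by
      norm_cast
      exact finrank_euclideanSpace_fin
    rw [← h]
    exact isAddHaarMeasure_hausdorffMeasure
  set B := Metric.closedBall (0 : E) 1 with hB
  set jP : E →ₗᵢ[ℝ] V := P.subtypeₗᵢ.comp f.toLinearIsometry with hjP
  set jQ : E →ₗᵢ[ℝ] V := Q.subtypeₗᵢ.comp φ.toLinearIsometry with hjQ
  set A : Set V := jP '' B with hA
  have hAc : IsCompact A := (isCompact_closedBall (0:E) 1).image jP.continuous
  have hAconv : Convex ℝ A := (convex_closedBall (0:E) 1).linear_image jP.toLinearMap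
  have hAsub : A ⊆ (P : Set V) := by
    rintro _ ⟨x, -, rfl⟩
    exact (f x).2
  have hcomp : (fun x => (Submodule.orthogonalProjectionOnto Q x : V)) '' A = jQ '' (T '' B) := by
    rw [hA, ← image_comp, ← image_comp]
    refine image_congr fun x _ => ?_
    simp only [Function.comp_apply, hjP, hjQ, hT, projMap, LinearMap.comp_apply,
      LinearIsometry.coe_comp, Submodule.coe_subtypeₗᵢ, LinearEquiv.coe_coe,
      LinearIsometryEquiv.coe_toLinearEquiv, LinearIsometryEquiv.coe_toLinearIsometry,
      Submodule.coe_subtype, LinearIsometryEquiv.apply_symm_apply]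
    rw [show ∀ y, φ ((isomE Q hQ).symm y) = y from fun y => φ.apply_symm_apply y]
    rfl
  have hk : (0:ℝ) ≤ (k:ℝ) := by positivity
  have him1 : μH[(k:ℝ)] A = μH[(k:ℝ)] B := jP.isometry.hausdorffMeasure_image (Or.inl hk) B
  have him2 : μH[(k:ℝ)] (jQ '' (T '' B)) = μH[(k:ℝ)] (T '' B) :=
    jQ.isometry.hausdorffMeasure_image (Or.inl hk) (T '' B)
  have hdet : μH[(k:ℝ)] (T '' B) = ENNReal.ofReal |LinearMap.det T| * μH[(k:ℝ)] B :=
    Measure.addHaar_image_linearMap _ T B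
  have e1 := h1 A hAc hAconv hAsub
  rw [hcomp, him1, him2, hdet, ENNReal.toReal_mul, ENNReal.toReal_ofReal (abs_nonneg _)] at e1
  have hr : (μH[(k:ℝ)] B).toReal ≠ 0 := by
    refine ENNReal.toReal_ne_zero.mpr ⟨?_, ?_⟩
    · exact (Metric.measure_closedBall_pos (μH[(k:ℝ)] : Measure E) (0:E) one_pos).ne'
    · exact (isCompact_closedBall (0:E) 1).measure_lt_top.ne
  exact (mul_right_cancel₀ hr e1).symm

/-- The cosine of a pair of `k`-dimensional subspaces, defined by
`vol_k(π_Q(A)) = cos(P,Q)·vol_k(A)` for compact convex `A ⊆ P`, is symmetric. -/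
theorem stmt_5 (n k : ℕ) (P Q : Submodule ℝ (EuclideanSpace ℝ (Fin n)))
    (hP : Module.finrank ℝ P = k) (hQ : Module.finrank ℝ Q = k)
    (cPQ cQP : ℝ)
    (h1 : ∀ A : Set (EuclideanSpace ℝ (Fin n)), IsCompact A → Convex ℝ A →
      A ⊆ (P : Set (EuclideanSpace ℝ (Fin n))) →
      (μH[(k : ℝ)] ((fun x => (Submodule.orthogonalProjectionOnto Q x : EuclideanSpace ℝ (Fin n))) '' A)).toReal
        = cPQ * (μH[(k : ℝ)] A).toReal)
    (h2 : ∀ A : Set (EuclideanSpace ℝ (Fin n)), IsCompact A → Convex ℝ A →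
      A ⊆ (Q : Set (EuclideanSpace ℝ (Fin n))) →
      (μH[(k : ℝ)] ((fun x => (Submodule.orthogonalProjectionOnto P x : EuclideanSpace ℝ (Fin n))) '' A)).toReal
        = cQP * (μH[(k : ℝ)] A).toReal) :
    cPQ = cQP := by
  rw [cos_eq_det P Q hP hQ cPQ h1, cos_eq_det Q P hQ hP cQP h2,
    projMap_adjoint P Q hP hQ, det_adjoint_real]
end

section
/- For smooth strictly convex bodies A, B in ℝ^n, the highest-degree (degree n) homogeneous component of the Alesker product μ_A · μ_B equals vol(A − B) · vol, where A − B = {a − b : a ∈ A, b ∈ B}. -/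
open Set MeasureTheory
open scoped Pointwise

namespace Stmt19Aux

variable {n : ℕ}

local notation "𝔼" => EuclideanSpace ℝ (Fin n)

lemma fiber_eq (K' A B : Set 𝔼) (d y : 𝔼) :
    ((d + y, y) ∈ (fun v => (v, v)) '' K' + A ×ˢ B) ↔
      y ∈ K' + B ∩ ((· + d) ⁻¹' A) := by
  constructor
  · rintro ⟨p, ⟨c, hc, rfl⟩, q, hq, hpq⟩
    have h1 : c + q.1 = d + y := congrArg Prod.fst hpq
    have h2 : c + q.2 = y := congrArg Prod.snd hpq
    have h3 : q.2 + d = q.1 := by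
      apply add_left_cancel (a := c)
      rw [← add_assoc, h2, h1]
      exact add_comm y d
    refine ⟨c, hc, q.2, ⟨hq.2, ?_⟩, h2⟩
    show q.2 + d ∈ A
    rw [h3]; exact hq.1
  · rintro ⟨c, hc, b, ⟨hbB, hbA⟩, rfl⟩
    refine ⟨(c, c), ⟨c, hc, rfl⟩, (b + d, b), ⟨hbA, hbB⟩, ?_⟩
    show ((c, c) : 𝔼 × 𝔼) + (b + d, b) = (d + (c + b), c + b)
    rw [Prod.mk_add_mk]
    refine Prod.ext_iff.mpr ⟨?_, rfl⟩
    show c + (b + d) = d + (c + b)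
    rw [← add_assoc]
    exact add_comm (c + b) d

lemma key (K' A B : Set 𝔼) (hK' : IsCompact K') (hA : IsCompact A) (hB : IsCompact B) :
    volume ((fun v => (v, v)) '' K' + A ×ˢ B)
      = ∫⁻ d, volume (K' + B ∩ ((· + d) ⁻¹' A)) := by
  have hScpt : IsCompact ((fun v => (v, v)) '' K' + A ×ˢ B) :=
    (hK'.image (continuous_id.prodMk continuous_id)).add (hA.prod hB)
  have hSm : MeasurableSet ((fun v => (v, v)) '' K' + A ×ˢ B) :=
    hScpt.isClosed.measurableSet
  have hψ : Measurable (fun z : 𝔼 × 𝔼 => (z.1 + z.2, z.2)) :=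
    (measurable_fst.add measurable_snd).prodMk measurable_snd
  have h1 := (measurePreserving_add_prod (volume : Measure 𝔼)
      volume).measure_preimage hSm.nullMeasurableSet
  rw [MeasureTheory.Measure.volume_eq_prod 𝔼 𝔼, ← h1, Measure.prod_apply (hψ hSm)]
  refine lintegral_congr fun d => ?_
  congr 1
  ext y
  simpa using fiber_eq K' A B d y

lemma lower_indicator (K' A B : Set 𝔼) (d : 𝔼) :
    (A - B).indicator (fun _ => volume K') d ≤ volume (K' + B ∩ ((· + d) ⁻¹' A)) := by
  by_cases hd : d ∈ A - B
  · rw [Set.indicator_of_mem hd]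
    obtain ⟨a, ha, b, hb, rfl⟩ := hd
    have hbmem : b ∈ B ∩ ((· + (a - b)) ⁻¹' A) := by
      refine ⟨hb, ?_⟩
      show b + (a - b) ∈ A
      have : b + (a - b) = a := by
        rw [add_comm, sub_add_cancel]
      rw [this]; exact ha
    have hsub : K' + ({b} : Set 𝔼) ⊆ K' + B ∩ ((· + (a - b)) ⁻¹' A) :=
      Set.add_subset_add_left (Set.singleton_subset_iff.2 hbmem)
    calc volume K' = volume (K' + ({b} : Set 𝔼)) := by
          rw [Set.add_singleton, Set.image_add_right, measure_preimage_add_right]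
      _ ≤ _ := measure_mono hsub
  · rw [Set.indicator_of_notMem hd]
    exact zero_le

lemma upper_indicator (K' A B : Set 𝔼) (R : ℝ) (hBR : B ⊆ Metric.closedBall 0 R) (d : 𝔼) :
    volume (K' + B ∩ ((· + d) ⁻¹' A))
      ≤ (A - B).indicator (fun _ => volume (K' + Metric.closedBall 0 R)) d := by
  by_cases hd : d ∈ A - B
  · rw [Set.indicator_of_mem hd]
    exact measure_mono (Set.add_subset_add_left ((Set.inter_subset_left).trans hBR))
  · rw [Set.indicator_of_notMem hd]
    have : B ∩ ((· + d) ⁻¹' A) = ∅ := by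
      ext b
      simp only [Set.mem_inter_iff, Set.mem_preimage, Set.mem_empty_iff_false, iff_false]
      rintro ⟨hbB, hbA⟩
      exact hd ⟨b + d, hbA, b, hbB, add_sub_cancel_left b d⟩
    rw [this, Set.add_empty, measure_empty]

end Stmt19Aux

open Stmt19Aux

set_option maxHeartbeats 1000000 in
/-- The top-degree homogeneous component of the Alesker product `μ_A · μ_B` is
`vol(A − B) · vol`:  `lim_{t→∞} t^{−n} vol_{2n}(Δ(tK) + A×B) = vol(K) · vol(A − B)`
for every convex body `K` of positive volume. -/
theorem stmt_19 (n : ℕ) (A B K : Set (EuclideanSpace ℝ (Fin n)))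
    (hAcpt : IsCompact A) (hAconv : Convex ℝ A) (hAstrict : StrictConvex ℝ A)
    (hAne : A.Nonempty)
    (hBcpt : IsCompact B) (hBconv : Convex ℝ B) (hBstrict : StrictConvex ℝ B)
    (hBne : B.Nonempty)
    (hKcpt : IsCompact K) (hKconv : Convex ℝ K) (hKvol : 0 < volume K) :
    Filter.Tendsto
      (fun t : ℝ => (volume ((fun v => (v, v)) '' (t • K) + A ×ˢ B)).toReal / t ^ n)
      Filter.atTop
      (nhds ((volume K).toReal * (volume (A - B)).toReal)) := by
  obtain ⟨R, hR1, hBR⟩ := hBcpt.isBounded.subset_closedBall_lt 1 0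
  have hR0 : (0 : ℝ) < R := lt_trans one_pos hR1
  set c := volume (A - B) with hc
  have hABcpt : IsCompact (A - B) := by
    rw [← Set.image2_sub, ← Set.image_prod]
    exact (hAcpt.prod hBcpt).image (continuous_fst.sub continuous_snd)
  have hABm : MeasurableSet (A - B) := hABcpt.isClosed.measurableSet
  have hcfin : c ≠ ⊤ := hABcpt.measure_ne_top
  have hKfin : volume K ≠ ⊤ := hKcpt.measure_ne_top
  set G : ℝ → ENNReal := fun t => volume (K + Metric.closedBall 0 (R / t)) with hGdef
  have hGfin : ∀ t, G t ≠ ⊤ := fun t =>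
    (hKcpt.add (isCompact_closedBall 0 _)).measure_ne_top
  -- K is contained in each fattening
  have hKsub : ∀ {r : ℝ}, 0 ≤ r → K ⊆ K + Metric.closedBall 0 r := by
    intro r hr x hx
    exact ⟨x, hx, 0, Metric.mem_closedBall_self hr, add_zero x⟩
  -- monotonicity of G on positives
  have hmono : ∀ ⦃a b : ℝ⦄, 0 < a → a ≤ b → G b ≤ G a := by
    intro a b ha hab
    refine measure_mono (Set.add_subset_add_left (Metric.closedBall_subset_closedBall ?_))
    gcongr
  -- the ℕ-indexed sequence
  have hiInter : (⋂ m : ℕ, (K + Metric.closedBall 0 (1 / (m + 1)))) = K := by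
    apply Set.Subset.antisymm
    · intro x hx
      rw [← hKcpt.isClosed.closure_eq]
      rw [Metric.mem_closure_iff]
      intro ε hε
      obtain ⟨m, hm⟩ := exists_nat_one_div_lt hε
      obtain ⟨k, hk, e, he, hxe⟩ := Set.mem_iInter.1 hx m
      refine ⟨k, hk, ?_⟩
      have hxk : x - k = e := by rw [← hxe]; exact add_sub_cancel_left k e
      rw [dist_eq_norm, hxk]
      calc ‖e‖ ≤ 1 / (m + 1) := mem_closedBall_zero_iff.1 he
        _ < ε := hm
    · intro x hx
      exact Set.mem_iInter.2 fun m => hKsub (by positivity) hx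
  have hseq : volume K = ⨅ m : ℕ, volume (K + Metric.closedBall 0 (1 / (m + 1))) := by
    conv_lhs => rw [← hiInter]
    refine Directed.measure_iInter (fun m =>
      ((hKcpt.add (isCompact_closedBall 0 _)).isClosed.measurableSet).nullMeasurableSet)
      ?_ ⟨0, (hKcpt.add (isCompact_closedBall 0 _)).measure_ne_top⟩
    have hanti : Antitone (fun m : ℕ => K + Metric.closedBall 0 (1 / (m + 1))) := by
      intro i j hij
      refine Set.add_subset_add_left (Metric.closedBall_subset_closedBall ?_)
      have hij' : (i : ℝ) + 1 ≤ (j : ℝ) + 1 := by exact_mod_cast Nat.succ_le_succ hij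
      gcongr
    exact hanti.directed_ge
  -- H' : modified antitone version of G
  set H : ℝ → ENNReal := fun t => G (max t 1) with hHdef
  have hHanti : Antitone H := fun a b hab =>
    hmono (lt_of_lt_of_le one_pos (le_max_right a 1)) (max_le_max hab le_rfl)
  have hHiInf : (⨅ t : ℝ, H t) = volume K := by
    refine le_antisymm ?_ (le_iInf fun t => ?_)
    · rw [hseq]
      refine le_iInf fun m => ?_
      refine iInf_le_of_le ((m + 1) * R) ?_
      have hge1 : (1 : ℝ) ≤ ((m : ℝ) + 1) * R := by
        have h1 : (0 : ℝ) ≤ (m : ℝ) := Nat.cast_nonneg m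
        nlinarith
      have hmax : max (((m : ℝ) + 1) * R) 1 = ((m : ℝ) + 1) * R := max_eq_left hge1
      show G (max (((m : ℝ) + 1) * R) 1) ≤ _
      rw [hmax]
      refine le_of_eq ?_
      show volume (K + Metric.closedBall 0 (R / (((m : ℝ) + 1) * R))) = _
      have hrad : R / (((m : ℝ) + 1) * R) = 1 / ((m : ℝ) + 1) := by
        rw [div_eq_div_iff (by positivity) (by positivity)]
        ring
      rw [hrad]
    · exact measure_mono (hKsub (by positivity))
  have hHtendsto : Filter.Tendsto H Filter.atTop (nhds (volume K)) := by
    rw [← hHiInf]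
    exact tendsto_atTop_iInf hHanti
  have hGtendsto : Filter.Tendsto G Filter.atTop (nhds (volume K)) := by
    refine hHtendsto.congr' ?_
    filter_upwards [Filter.eventually_ge_atTop (1 : ℝ)] with t ht
    show G (max t 1) = G t
    rw [max_eq_left ht]
  -- the candidate upper bound function
  have hUtendsto : Filter.Tendsto (fun t => (G t).toReal * c.toReal) Filter.atTop
      (nhds ((volume K).toReal * c.toReal)) :=
    (((ENNReal.tendsto_toReal hKfin).comp hGtendsto).mul_const _)
  refine tendsto_of_tendsto_of_tendsto_of_le_of_le' tendsto_const_nhds hUtendsto ?_ ?_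
  · -- lower bound eventually
    filter_upwards [Filter.eventually_ge_atTop (1 : ℝ)] with t ht
    have ht0 : (0 : ℝ) < t := lt_of_lt_of_le one_pos ht
    have htn : (0 : ℝ) < t ^ n := pow_pos ht0 n
    have htKcpt : IsCompact (t • K) := by
      have := hKcpt.image (continuous_const_smul t)
      simpa using this
    have hSfin : volume ((fun v => (v, v)) '' (t • K) + A ×ˢ B) ≠ ⊤ :=
      ((htKcpt.image (continuous_id.prodMk continuous_id)).add
        (hAcpt.prod hBcpt)).measure_ne_top
    have hvol_smul : volume (t • K) = ENNReal.ofReal (t ^ n) * volume K := by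
      rw [Measure.addHaar_smul, finrank_euclideanSpace_fin,
        abs_of_pos htn]
    have hlow : ENNReal.ofReal (t ^ n) * volume K * c
        ≤ volume ((fun v => (v, v)) '' (t • K) + A ×ˢ B) := by
      rw [key (t • K) A B htKcpt hAcpt hBcpt]
      calc ENNReal.ofReal (t ^ n) * volume K * c
          = ∫⁻ d, (A - B).indicator (fun _ => volume (t • K)) d := by
            rw [lintegral_indicator_const hABm, hvol_smul, mul_comm]
        _ ≤ _ := lintegral_mono (lower_indicator (t • K) A B)
    have hlowR : ((volume K).toReal * c.toReal) * t ^ n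
        ≤ (volume ((fun v => (v, v)) '' (t • K) + A ×ˢ B)).toReal := by
      have := ENNReal.toReal_mono hSfin hlow
      rw [ENNReal.toReal_mul, ENNReal.toReal_mul, ENNReal.toReal_ofReal htn.le] at this
      linarith [this]
    rw [le_div_iff₀ htn]
    exact hlowR
  · -- upper bound eventually
    filter_upwards [Filter.eventually_ge_atTop (1 : ℝ)] with t ht
    have ht0 : (0 : ℝ) < t := lt_of_lt_of_le one_pos ht
    have htn : (0 : ℝ) < t ^ n := pow_pos ht0 n
    have htKcpt : IsCompact (t • K) := by
      have := hKcpt.image (continuous_const_smul t)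
      simpa using this
    have hsmul_eq : t • K + Metric.closedBall (0 : EuclideanSpace ℝ (Fin n)) R
        = t • (K + Metric.closedBall 0 (R / t)) := by
      have h2 : t • Metric.closedBall (0 : EuclideanSpace ℝ (Fin n)) (R / t)
          = Metric.closedBall 0 R := by
        rw [smul_closedBall t 0 (by positivity), smul_zero, Real.norm_eq_abs, abs_of_pos ht0]
        congr 1
        rw [mul_div_assoc']
        rw [mul_comm, mul_div_assoc, div_self ht0.ne', mul_one]
      rw [smul_add, h2]
    have hup : volume ((fun v => (v, v)) '' (t • K) + A ×ˢ B)
        ≤ ENNReal.ofReal (t ^ n) * G t * c := by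
      rw [key (t • K) A B htKcpt hAcpt hBcpt]
      calc ∫⁻ d, volume (t • K + B ∩ ((· + d) ⁻¹' A))
          ≤ ∫⁻ d, (A - B).indicator
              (fun _ => volume (t • K + Metric.closedBall 0 R)) d :=
            lintegral_mono (upper_indicator (t • K) A B R hBR)
        _ = volume (t • K + Metric.closedBall 0 R) * c := by
            rw [lintegral_indicator_const hABm, mul_comm]
        _ = ENNReal.ofReal (t ^ n) * G t * c := by
            rw [hsmul_eq, Measure.addHaar_smul, finrank_euclideanSpace_fin, abs_of_pos htn]
    have hfinR : ENNReal.ofReal (t ^ n) * G t * c ≠ ⊤ :=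
      ENNReal.mul_ne_top (ENNReal.mul_ne_top ENNReal.ofReal_ne_top (hGfin t)) hcfin
    have hupR : (volume ((fun v => (v, v)) '' (t • K) + A ×ˢ B)).toReal
        ≤ t ^ n * ((G t).toReal * c.toReal) := by
      have := ENNReal.toReal_mono hfinR hup
      rw [ENNReal.toReal_mul, ENNReal.toReal_mul, ENNReal.toReal_ofReal htn.le] at this
      linarith [this]
    rw [div_le_iff₀ htn]
    linarith [hupR]
end
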